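/- arXiv:2303.10161 — 7 statements merged into one kernel-verified Lean document; each statement's English description precedes it below -/
import Mathlib

section
/- Let A be a symmetric positive definite n×n real matrix and X any n×n real matrix, and define 𝓛_A(X) := ∫₀^∞ exp(−τA) X exp(−τA) dτ. Then A·𝓛_A(X) + 𝓛_A(X)·A = X; that is, 𝓛_A inverts the Sylvester operator X ↦ A X + X A. -/
open Matrix MeasureTheory

attribute [local instance] Matrix.linftyOpNormedAddCommGroup Matrix.linftyOpNormedSpace

/-- The Bochner integral `∫₀^∞ exp(-τA) X exp(-τA) dτ` of matrix-valued functions. -/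
noncomputable def lyapInt {n : ℕ} (A X : Matrix (Fin n) (Fin n) ℝ) : Matrix (Fin n) (Fin n) ℝ :=
  ∫ τ in Set.Ioi (0 : ℝ), NormedSpace.exp (-(τ • A)) * X * NormedSpace.exp (-(τ • A))

/-!
The integrand `f τ = exp (-τA) X exp (-τA)` satisfies `f' = -(A f + f A)`. By the spectral theorem
`exp (-τA) = O(exp (-lτ))` for some `l > 0` (any `l` below the smallest eigenvalue of `A`), so `f`
and `f'` are integrable on `(0, ∞)` and `f → 0`; integrating `f'` over `(0, ∞)` then gives
`-(A 𝓛_A(X) + 𝓛_A(X) A) = 0 - f 0 = -X`.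
-/

open NormedSpace Filter Asymptotics Set

section NormedAlgebra

variable {𝔸 : Type*} [NormedRing 𝔸] [NormedAlgebra ℝ 𝔸] [CompleteSpace 𝔸]

theorem hasDerivAt_exp_neg_smul (a : 𝔸) (t : ℝ) :
    HasDerivAt (fun s : ℝ => exp (-(s • a))) (-(a * exp (-(t • a)))) t := by
  simpa only [smul_neg, neg_smul, neg_mul] using hasDerivAt_exp_smul_const' (-a) t

theorem hasDerivAt_exp_neg_smul_mul_mul_exp_neg_smul (a x : 𝔸) (t : ℝ) :
    HasDerivAt (fun s : ℝ => exp (-(s • a)) * x * exp (-(s • a)))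
      (-(a * (exp (-(t • a)) * x * exp (-(t • a))) + exp (-(t • a)) * x * exp (-(t • a)) * a))
      t := by
  set e := exp (-(t • a))
  have hcomm : e * x * (a * e) = e * x * e * a := by
    rw [← (((Commute.refl a).smul_left t).neg_left.exp_left).eq, ← mul_assoc]
  refine (((hasDerivAt_exp_neg_smul a t).mul_const x).mul
    (hasDerivAt_exp_neg_smul a t)).congr_deriv ?_
  rw [mul_neg, hcomm]
  noncomm_ring

theorem sylvester_of_isBigO_exp_neg_smul {a : 𝔸} (x : 𝔸) {l : ℝ} (hl : 0 < l)
    (hdecay : (fun t : ℝ => exp (-(t • a))) =O[atTop] fun t => Real.exp (-l * t)) :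
    a * (∫ t : ℝ in Ioi 0, exp (-(t • a)) * x * exp (-(t • a))) +
      (∫ t : ℝ in Ioi 0, exp (-(t • a)) * x * exp (-(t • a))) * a = x := by
  set f : ℝ → 𝔸 := fun t => exp (-(t • a)) * x * exp (-(t • a))
  have hderiv (t : ℝ) : HasDerivAt f (-(a * f t + f t * a)) t :=
    hasDerivAt_exp_neg_smul_mul_mul_exp_neg_smul a x t
  have hcont : Continuous f := continuous_iff_continuousAt.2 fun t => (hderiv t).continuousAt
  have hf_isBigO : f =O[atTop] fun t => Real.exp (-(2 * l) * t) := by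
    refine ((hdecay.mul (isBigO_const_one ℝ x atTop)).mul hdecay).congr_right fun t => ?_
    rw [mul_one, ← Real.exp_add]
    ring_nf
  have hf_int : IntegrableOn f (Ioi 0) := by
    refine (integrableOn_Ici_iff_integrableOn_Ioi enorm_ne_top).mp <|
      (hcont.locallyIntegrable.locallyIntegrableOn _).integrableOn_of_isBigO_atTop hf_isBigO
        ⟨Ioi 0, Ioi_mem_atTop 0, exp_neg_integrableOn_Ioi 0 (by positivity)⟩
  have hf_tendsto : Tendsto f atTop (nhds 0) :=
    hf_isBigO.trans_tendsto <| Real.tendsto_exp_atBot.comp <|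
      tendsto_id.const_mul_atTop_of_neg (by linarith)
  have hFTC := integral_Ioi_of_hasDerivAt_of_tendsto hcont.continuousWithinAt
    (fun t _ => hderiv t) ((hf_int.const_mul a).add (hf_int.mul_const a)).neg hf_tendsto
  rw [integral_neg, integral_add (hf_int.const_mul a) (hf_int.mul_const a),
    integral_const_mul_of_integrable hf_int, integral_mul_const_of_integrable hf_int, zero_sub,
    neg_inj] at hFTC
  exact hFTC.trans (by simp [f])

end NormedAlgebra

namespace Matrix

variable {m : Type*} [Fintype m] [DecidableEq m]

attribute [local instance] Matrix.linftyOpNormedRing Matrix.linftyOpNormedAlgebra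

open Unitary

theorem IsHermitian.exp_neg_smul {A : Matrix m m ℝ} (hA : A.IsHermitian) (t : ℝ) :
    NormedSpace.exp (-(t • A)) = conjStarAlgAut ℝ _ hA.eigenvectorUnitary
      (diagonal fun i => Real.exp (-t * hA.eigenvalues i)) := by
  have hinv : (hA.eigenvectorUnitary : Matrix m m ℝ)⁻¹ =
      star (hA.eigenvectorUnitary : Matrix m m ℝ) :=
    inv_eq_left_inv (coe_star_mul_self _)
  have hdiag : -(t • diagonal hA.eigenvalues) = diagonal fun i => -t * hA.eigenvalues i := by
    rw [← diagonal_smul, diagonal_neg]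
    simp
  conv_lhs => rw [hA.spectral_theorem]
  rw [RCLike.ofReal_real_eq_id, Function.id_comp, ← map_smul, ← map_neg, hdiag,
    conjStarAlgAut_apply, conjStarAlgAut_apply, ← hinv, exp_conj _ _ isUnit_coe, exp_diagonal,
    Pi.exp_def]
  simp [Real.exp_eq_exp_ℝ]

theorem PosDef.isBigO_exp_neg_smul {A : Matrix m m ℝ} (hA : A.PosDef) :
    ∃ l > 0, (fun t : ℝ => NormedSpace.exp (-(t • A))) =O[atTop] fun t => Real.exp (-l * t) := by
  obtain ⟨l, hl_lt, hl_pos⟩ : ∃ l, (∀ i, l < hA.isHermitian.eigenvalues i) ∧ 0 < l :=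
    ((eventually_all.2 fun i => (eventually_lt_nhds (hA.eigenvalues_pos i)).filter_mono
      nhdsWithin_le_nhds).and self_mem_nhdsWithin).exists (f := nhdsWithin 0 (Ioi 0))
  refine ⟨l, hl_pos, ?_⟩
  have hdiag : (fun t : ℝ => diagonal fun i => Real.exp (-t * hA.isHermitian.eigenvalues i))
      =O[atTop] fun t => Real.exp (-l * t) := by
    rw [← isBigO_norm_left]
    simp only [linfty_opNorm_diagonal, isBigO_norm_left]
    refine isBigO_pi.2 fun i => IsBigO.of_bound 1 ?_
    filter_upwards [eventually_ge_atTop 0] with t ht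
    simp only [Real.norm_eq_abs, Real.abs_exp, one_mul, Real.exp_le_exp]
    nlinarith [hl_lt i]
  simp_rw [hA.isHermitian.exp_neg_smul, conjStarAlgAut_apply]
  simpa using ((hdiag.const_mul_left _).mul (isBigO_const_one ℝ _ atTop))

end Matrix

/-- For `A` symmetric positive definite, `𝓛_A(X) = ∫₀^∞ exp(-τA) X exp(-τA) dτ` inverts the
Sylvester operator: `A 𝓛_A(X) + 𝓛_A(X) A = X`. -/
theorem lyapInt_solves_sylvester {n : ℕ} (A X : Matrix (Fin n) (Fin n) ℝ) (hA : A.PosDef) :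
    A * lyapInt A X + lyapInt A X * A = X := by
  let := Matrix.linftyOpNormedRing (n := Fin n) (α := ℝ)
  let := Matrix.linftyOpNormedAlgebra (n := Fin n) (R := ℝ) (α := ℝ)
  obtain ⟨l, hl, hdecay⟩ := hA.isBigO_exp_neg_smul
  exact sylvester_of_isBigO_exp_neg_smul X hl hdecay
end

section
/- Let K and T be symmetric positive definite n×n real matrices, let k_B > 0, and let Σ be the (unique) positive definite solution of the algebraic Lyapunov equation K Σ + Σ K = 2 k_B T. Then K and Σ commute if and only if K and T commute; moreover, in that case Σ = k_B T K⁻¹. -/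
/-!
For `K` positive definite the Lyapunov operator `X ↦ K X + X K` is injective: writing
`K = Bᴴ B`, the equation `K X + X K = 0` gives `tr ((B X)ᴴ (B X)) = - tr ((B Xᴴ)ᴴ (B Xᴴ))`, and both
traces are nonnegative, so `B X = 0` and hence `K X = 0`. If `K` commutes with `T`, then
`k_B T K⁻¹` solves the equation, so it is `S`, and it commutes with `K`. Conversely, if `K`
commutes with `S`, the equation reads `2 S K = 2 k_B T`, and `K` commutes with `S K`.
-/

open Matrix
open scoped ComplexOrder MatrixOrder

namespace Matrix.PosDef

variable {m 𝕜 : Type*} [Fintype m] [DecidableEq m] [RCLike 𝕜] {K X Y : Matrix m m 𝕜}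

theorem eq_zero_of_mul_add_mul_eq_zero (hK : K.PosDef) (h : K * X + X * K = 0) : X = 0 := by
  obtain ⟨B, hB⟩ := CStarAlgebra.nonneg_iff_eq_star_mul_self.mp hK.posSemidef.nonneg
  rw [star_eq_conjTranspose] at hB
  have htrace : ((B * X)ᴴ * (B * X)).trace = -((B * Xᴴ)ᴴ * (B * Xᴴ)).trace := by
    have hKX : K * X = -(X * K) := eq_neg_of_add_eq_zero_left h
    calc ((B * X)ᴴ * (B * X)).trace = (Xᴴ * (K * X)).trace := by
          simp only [conjTranspose_mul, hB, Matrix.mul_assoc]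
      _ = -(X * K * Xᴴ).trace := by
          rw [hKX, Matrix.mul_neg, trace_neg, trace_mul_comm]
      _ = -((B * Xᴴ)ᴴ * (B * Xᴴ)).trace := by
          simp only [conjTranspose_mul, conjTranspose_conjTranspose, hB, Matrix.mul_assoc]
  have hBX : B * X = 0 := trace_conjTranspose_mul_self_eq_zero_iff.mp <| le_antisymm
    (htrace ▸ neg_nonpos.mpr (posSemidef_conjTranspose_mul_self _).trace_nonneg)
    (posSemidef_conjTranspose_mul_self _).trace_nonneg
  rw [← hK.isUnit.mul_right_eq_zero, hB, Matrix.mul_assoc, hBX, Matrix.mul_zero]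

theorem eq_of_mul_add_mul_eq (hK : K.PosDef) (h : K * X + X * K = K * Y + Y * K) : X = Y :=
  sub_eq_zero.mp <| hK.eq_zero_of_mul_add_mul_eq_zero <| by
    rw [Matrix.mul_sub, Matrix.sub_mul, sub_add_sub_comm, h, sub_self]

end Matrix.PosDef

theorem commute_iff_commute_general {n : ℕ} (K T S : Matrix (Fin n) (Fin n) ℝ) (k_B : ℝ)
    (hK : K.PosDef) (hkB : 0 < k_B)
    (hlyap : K * S + S * K = (2 * k_B) • T) :
    (K * S = S * K ↔ K * T = T * K) ∧
    (K * S = S * K → S = k_B • (T * K⁻¹)) := by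
  have hdet : IsUnit K.det := (isUnit_iff_isUnit_det K).mp hK.isUnit
  have hSK_of_commute (hc : K * S = S * K) : S * K = k_B • T :=
    smul_right_injective _ (two_ne_zero : (2 : ℝ) ≠ 0)
      (show (2 : ℝ) • (S * K) = (2 : ℝ) • (k_B • T) by rw [smul_smul, ← hlyap, hc, two_smul])
  have hTK_inv (hKT : K * T = T * K) : K * (T * K⁻¹) = T ∧ T * K⁻¹ * K = T :=
    ⟨by rw [← Matrix.mul_assoc, hKT, mul_nonsing_inv_cancel_right _ _ hdet],
      nonsing_inv_mul_cancel_right _ _ hdet⟩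
  have hS_of_commute (hKT : K * T = T * K) : S = k_B • (T * K⁻¹) :=
    hK.eq_of_mul_add_mul_eq <| by
      rw [hlyap, mul_smul_comm, smul_mul_assoc, (hTK_inv hKT).1, (hTK_inv hKT).2, two_mul,
        add_smul]
  refine ⟨⟨fun hc => ?_, fun hKT => ?_⟩, fun hc => ?_⟩
  · refine smul_right_injective _ hkB.ne' (?_ : k_B • (K * T) = k_B • (T * K))
    rw [← mul_smul_comm, ← smul_mul_assoc, ← hSK_of_commute hc, ← Matrix.mul_assoc, hc]
  · rw [hS_of_commute hKT, mul_smul_comm, smul_mul_assoc, (hTK_inv hKT).1, (hTK_inv hKT).2]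
  · rw [← smul_mul_assoc, ← hSK_of_commute hc, mul_nonsing_inv_cancel_right _ _ hdet]

/-- Let `K, T` be symmetric positive definite, `k_B > 0`, and `S` the positive definite solution
of `K S + S K = 2 k_B T`.  Then `K` and `S` commute iff `K` and `T` commute, in which case
`S = k_B T K⁻¹`. -/
theorem commute_iff_commute {n : ℕ} (K T S : Matrix (Fin n) (Fin n) ℝ) (k_B : ℝ)
    (hK : K.PosDef) (hT : T.PosDef) (hkB : 0 < k_B) (hS : S.PosDef)
    (hlyap : K * S + S * K = (2 * k_B) • T) :
    (K * S = S * K ↔ K * T = T * K) ∧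
    (K * S = S * K → S = k_B • (T * K⁻¹)) :=
  commute_iff_commute_general K T S k_B hK hkB hlyap
end

section
/- Let Σ be a symmetric positive definite n×n real matrix, T a symmetric n×n real matrix, k_B > 0, and define F(Ω) := Tr(Ω Σ⁻¹ Ωᵀ) + k_B Tr(Ω Σ⁻¹ T) on skew-symmetric n×n matrices Ω. A skew-symmetric matrix Ω is a critical point of F (i.e., the first-order variation Tr(Δ (2ΩΣ⁻¹ + k_B T Σ⁻¹)) vanishes for every skew-symmetric Δ) if and only if the matrix M := 2 Ω Σ⁻¹ + k_B T Σ⁻¹ is symmetric, equivalently if and only if Σ⁻¹ Ω + Ω Σ⁻¹ = (k_B/2)(Σ⁻¹ T − T Σ⁻¹). -/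
open Matrix

lemma trace_tAA_zero {n : ℕ} (A : Matrix (Fin n) (Fin n) ℝ)
    (h : (Aᵀ * A).trace = 0) : A = 0 := by
  have h' : ∑ i, ∑ j, A j i * A j i = 0 := by
    simpa [Matrix.trace, Matrix.diag, Matrix.mul_apply] using h
  ext i j
  have hnn : ∀ i ∈ Finset.univ, (0:ℝ) ≤ ∑ j, A j i * A j i := by
    intro i _
    exact Finset.sum_nonneg fun j _ => mul_self_nonneg _
  have h2 := (Finset.sum_eq_zero_iff_of_nonneg hnn).mp h' j (Finset.mem_univ j)
  have hnn2 : ∀ k ∈ Finset.univ, (0:ℝ) ≤ A k j * A k j := fun k _ => mul_self_nonneg _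
  have := (Finset.sum_eq_zero_iff_of_nonneg hnn2).mp h2 i (Finset.mem_univ i)
  simpa [mul_self_eq_zero] using this

lemma skew_trace_iff {n : ℕ} (M : Matrix (Fin n) (Fin n) ℝ) :
    (∀ Δ : Matrix (Fin n) (Fin n) ℝ, Δᵀ = -Δ → (Δ * M).trace = 0) ↔ Mᵀ = M := by
  constructor
  · intro h
    set A := M - Mᵀ with hA
    have hAskew : Aᵀ = -A := by
      rw [hA, Matrix.transpose_sub, Matrix.transpose_transpose, neg_sub]
    have h1 : (A * M).trace = 0 := h A hAskew
    have h2 : (A * Mᵀ).trace = 0 := by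
      have : (A * Mᵀ).trace = ((A * Mᵀ)ᵀ).trace := (Matrix.trace_transpose _).symm
      rw [this, Matrix.transpose_mul, Matrix.transpose_transpose, hAskew,
        Matrix.mul_neg, Matrix.trace_neg, Matrix.trace_mul_comm]
      simpa using congrArg Neg.neg h1
    have hAA : (A * A).trace = 0 := by
      have : A * A = A * M - A * Mᵀ := by rw [hA]; noncomm_ring
      rw [this, Matrix.trace_sub, h1, h2, sub_zero]
    have hAtA : (Aᵀ * A).trace = 0 := by
      rw [hAskew, Matrix.neg_mul, Matrix.trace_neg, hAA, neg_zero]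
    have := trace_tAA_zero A hAtA
    have : M - Mᵀ = 0 := this
    have := sub_eq_zero.mp this
    exact this.symm
  · intro h Δ hΔ
    have h1 : (Δ * M).trace = ((Δ * M)ᵀ).trace := (Matrix.trace_transpose _).symm
    rw [Matrix.transpose_mul, h, hΔ, Matrix.mul_neg, Matrix.trace_neg,
      Matrix.trace_mul_comm] at h1
    rw [Matrix.trace_mul_comm]
    linarith

/-- A skew-symmetric `Ω` is a critical point of
`F(Ω) = Tr(Ω S⁻¹ Ωᵀ) + k_B Tr(Ω S⁻¹ T)` (i.e. the first variation
`Tr(Δ(2ΩS⁻¹ + k_B T S⁻¹))` vanishes for every skew-symmetric `Δ`) iff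
`M = 2ΩS⁻¹ + k_B T S⁻¹` is symmetric, iff `S⁻¹Ω + ΩS⁻¹ = (k_B/2)(S⁻¹T - TS⁻¹)`. -/
theorem critical_point_iff {n : ℕ} (S T Ω : Matrix (Fin n) (Fin n) ℝ) (k_B : ℝ)
    (hS : S.PosDef) (hT : T.IsHermitian) (hkB : 0 < k_B) (hΩ : Ωᵀ = -Ω) :
    ((∀ Δ : Matrix (Fin n) (Fin n) ℝ, Δᵀ = -Δ →
        (Δ * ((2 : ℝ) • (Ω * S⁻¹) + k_B • (T * S⁻¹))).trace = 0) ↔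
      ((2 : ℝ) • (Ω * S⁻¹) + k_B • (T * S⁻¹))ᵀ = (2 : ℝ) • (Ω * S⁻¹) + k_B • (T * S⁻¹)) ∧
    ((∀ Δ : Matrix (Fin n) (Fin n) ℝ, Δᵀ = -Δ →
        (Δ * ((2 : ℝ) • (Ω * S⁻¹) + k_B • (T * S⁻¹))).trace = 0) ↔
      S⁻¹ * Ω + Ω * S⁻¹ = (k_B / 2) • (S⁻¹ * T - T * S⁻¹)) := by
  have hST : Sᵀ = S := hS.isHermitian.eq
  have hSinvT : (S⁻¹)ᵀ = S⁻¹ := by rw [Matrix.transpose_nonsing_inv, hST]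
  have hTT : Tᵀ = T := hT.eq
  have hfirst := skew_trace_iff ((2 : ℝ) • (Ω * S⁻¹) + k_B • (T * S⁻¹))
  refine ⟨hfirst, hfirst.trans ?_⟩
  have hMT : ((2 : ℝ) • (Ω * S⁻¹) + k_B • (T * S⁻¹))ᵀ
      = (-2 : ℝ) • (S⁻¹ * Ω) + k_B • (S⁻¹ * T) := by
    rw [Matrix.transpose_add, Matrix.transpose_smul, Matrix.transpose_smul,
      Matrix.transpose_mul, Matrix.transpose_mul, hSinvT, hTT, hΩ, Matrix.mul_neg]
    module
  rw [hMT]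
  constructor
  · intro h
    have h2 : (2:ℝ) • (S⁻¹ * Ω + Ω * S⁻¹) = (2:ℝ) • ((k_B / 2) • (S⁻¹ * T - T * S⁻¹)) := by
      have : (2:ℝ) • (S⁻¹ * Ω + Ω * S⁻¹) = k_B • (S⁻¹ * T) - k_B • (T * S⁻¹) := by
        linear_combination (norm := (ext i j; simp [Matrix.sub_apply, Matrix.add_apply, Matrix.smul_apply, Matrix.neg_apply, Matrix.zero_apply, smul_eq_mul]; ring)) - h
      rw [this]
      rw [smul_smul]
      field_simp
      module
    have := smul_right_injective _ (two_ne_zero (α := ℝ)) h2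
    simpa using this
  · intro h
    have h2 : (2:ℝ) • (S⁻¹ * Ω) + (2:ℝ) • (Ω * S⁻¹) = k_B • (S⁻¹ * T) - k_B • (T * S⁻¹) := by
      ext i j
      have hh := congrFun (congrFun h i) j
      simp only [Matrix.add_apply, Matrix.smul_apply, Matrix.sub_apply, smul_eq_mul] at hh ⊢
      linear_combination 2 * hh
    linear_combination (norm := (ext i j; simp [Matrix.sub_apply, Matrix.add_apply, Matrix.smul_apply, Matrix.neg_apply, Matrix.zero_apply, smul_eq_mul]; ring)) - h2
end

section
/- Let Σ be a symmetric positive definite n×n real matrix, T a symmetric n×n real matrix, and k_B > 0. Then the equation Σ⁻¹ Ω + Ω Σ⁻¹ = (k_B/2)(Σ⁻¹ T − T Σ⁻¹) has a unique solution Ω among n×n real matrices; this solution is skew-symmetric and is given by Ω* = (k_B/2) 𝓛_{Σ⁻¹}(Σ⁻¹ T − T Σ⁻¹), where 𝓛_A(X) := ∫₀^∞ exp(−τA) X exp(−τA) dτ. -/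
open Matrix MeasureTheory

attribute [local instance] Matrix.linftyOpNormedAddCommGroup Matrix.linftyOpNormedSpace

/-!
Diagonalise `A = ∑ λᵢ Pᵢ` with orthogonal spectral projections `Pᵢ`. Then
`exp(-τA) X exp(-τA) = ∑ e^{-(λᵢ+λⱼ)τ} Pᵢ X Pⱼ`, so `𝓛_A(X) = ∑ (λᵢ+λⱼ)⁻¹ Pᵢ X Pⱼ`, and since
`A (Pᵢ X Pⱼ) + (Pᵢ X Pⱼ) A = (λᵢ+λⱼ) Pᵢ X Pⱼ` this solves `A Ω + Ω A = X`. Solvability for every `X`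
makes `Ω ↦ A Ω + Ω A` surjective, hence injective on the finite-dimensional space of matrices.
Transposing the equation shows that the solution for a skew-symmetric `X = Σ⁻¹T - TΣ⁻¹` is
skew-symmetric.
-/

open Set
open scoped ComplexOrder

namespace Matrix.IsHermitian

variable {𝕜 ι : Type*} [RCLike 𝕜] [Fintype ι] [DecidableEq ι] {A : Matrix ι ι 𝕜}

noncomputable def eigenProj (hA : A.IsHermitian) (i : ι) : Matrix ι ι 𝕜 :=
  (hA.eigenvectorUnitary : Matrix ι ι 𝕜) * single i i 1 *
    star (hA.eigenvectorUnitary : Matrix ι ι 𝕜)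

variable (hA : A.IsHermitian)

lemma eigenProj_mul_eigenProj (i j : ι) :
    hA.eigenProj i * hA.eigenProj j = if i = j then hA.eigenProj i else 0 := by
  have h : star (hA.eigenvectorUnitary : Matrix ι ι 𝕜) * hA.eigenvectorUnitary = 1 :=
    Unitary.coe_star_mul_self _
  simp only [eigenProj, Matrix.mul_assoc, ← Matrix.mul_assoc (star _), h, Matrix.one_mul]
  split_ifs with hij
  · rw [hij, ← Matrix.mul_assoc (single j j 1), single_mul_single_same, mul_one]
  · rw [← Matrix.mul_assoc (single i i 1), single_mul_single_of_ne (h := hij), Matrix.zero_mul,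
      Matrix.mul_zero]

lemma conj_diagonal_eq_sum_smul_eigenProj (f : ι → ℝ) :
    (hA.eigenvectorUnitary : Matrix ι ι 𝕜) * diagonal (fun i => (f i : 𝕜)) *
      star (hA.eigenvectorUnitary : Matrix ι ι 𝕜) = ∑ i, f i • hA.eigenProj i := by
  simp only [eigenProj, ← sum_single_eq_diagonal, Matrix.mul_sum, Matrix.sum_mul]
  refine Finset.sum_congr rfl fun i _ => ?_
  rw [← Matrix.smul_mul, ← Matrix.mul_smul, smul_single, RCLike.real_smul_eq_coe_mul, mul_one]

lemma sum_eigenProj : ∑ i, hA.eigenProj i = 1 := by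
  simpa using (hA.conj_diagonal_eq_sum_smul_eigenProj 1).symm

lemma sum_eigenvalues_smul_eigenProj : ∑ i, hA.eigenvalues i • hA.eigenProj i = A := by
  rw [← hA.conj_diagonal_eq_sum_smul_eigenProj]
  exact hA.spectral_theorem.symm

lemma mul_eigenProj (i : ι) : A * hA.eigenProj i = hA.eigenvalues i • hA.eigenProj i := by
  calc A * hA.eigenProj i = (∑ j, hA.eigenvalues j • hA.eigenProj j) * hA.eigenProj i := by
        rw [hA.sum_eigenvalues_smul_eigenProj]
    _ = hA.eigenvalues i • hA.eigenProj i := by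
        simp [Finset.sum_mul, eigenProj_mul_eigenProj]

lemma eigenProj_mul (i : ι) : hA.eigenProj i * A = hA.eigenvalues i • hA.eigenProj i := by
  calc hA.eigenProj i * A = hA.eigenProj i * ∑ j, hA.eigenvalues j • hA.eigenProj j := by
        rw [hA.sum_eigenvalues_smul_eigenProj]
    _ = hA.eigenvalues i • hA.eigenProj i := by
        simp [Finset.mul_sum, eigenProj_mul_eigenProj]

lemma exp_smul (t : ℝ) :
    NormedSpace.exp (t • A) = ∑ i, Real.exp (t * hA.eigenvalues i) • hA.eigenProj i := by
  have hdiag : (t : 𝕜) • diagonal (RCLike.ofReal ∘ hA.eigenvalues) =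
      diagonal (fun i => ((t * hA.eigenvalues i : ℝ) : 𝕜)) := by
    ext i j
    by_cases h : i = j <;> simp [h]
  have hexp : NormedSpace.exp (diagonal (fun i => ((t * hA.eigenvalues i : ℝ) : 𝕜))) =
      diagonal (fun i => ((Real.exp (t * hA.eigenvalues i) : ℝ) : 𝕜)) := by
    rw [exp_diagonal]
    congr 1
    funext i
    rw [Pi.exp_def, Real.exp_eq_exp_ℝ]
    exact (NormedSpace.algebraMap_exp_comm _).symm
  set U := (hA.eigenvectorUnitary : Matrix ι ι 𝕜)
  have hconj := Matrix.exp_units_conj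
    ⟨U, star U, Unitary.coe_mul_star_self _, Unitary.coe_star_mul_self _⟩
    (diagonal (fun i => ((t * hA.eigenvalues i : ℝ) : 𝕜)))
  simp only [Units.inv_mk, Units.val_mk] at hconj
  conv_lhs => rw [RCLike.real_smul_eq_coe_smul (K := 𝕜), hA.spectral_theorem, ← map_smul, hdiag]
  rw [Unitary.conjStarAlgAut_apply, hconj, hexp]
  exact hA.conj_diagonal_eq_sum_smul_eigenProj _

lemma sum_sum_eigenProj_mul_mul (X : Matrix ι ι 𝕜) :
    ∑ i, ∑ j, hA.eigenProj i * X * hA.eigenProj j = X := by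
  simp only [← Finset.mul_sum, ← Finset.sum_mul, sum_eigenProj, Matrix.one_mul, Matrix.mul_one]

lemma mul_add_mul_eigenProj_mul_mul (X : Matrix ι ι 𝕜) (i j : ι) :
    A * (hA.eigenProj i * X * hA.eigenProj j) + hA.eigenProj i * X * hA.eigenProj j * A =
      (hA.eigenvalues i + hA.eigenvalues j) • (hA.eigenProj i * X * hA.eigenProj j) := by
  have hl : A * (hA.eigenProj i * X * hA.eigenProj j) =
      hA.eigenvalues i • (hA.eigenProj i * X * hA.eigenProj j) := by
    rw [← Matrix.mul_assoc, ← Matrix.mul_assoc, mul_eigenProj, smul_mul_assoc, smul_mul_assoc]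
  have hr : hA.eigenProj i * X * hA.eigenProj j * A =
      hA.eigenvalues j • (hA.eigenProj i * X * hA.eigenProj j) := by
    rw [Matrix.mul_assoc, eigenProj_mul, mul_smul_comm]
  rw [hl, hr, add_smul]

lemma exp_smul_mul_mul_exp_smul (X : Matrix ι ι 𝕜) (t : ℝ) :
    NormedSpace.exp (t • A) * X * NormedSpace.exp (t • A) =
      ∑ i, ∑ j, Real.exp (t * (hA.eigenvalues i + hA.eigenvalues j)) •
        (hA.eigenProj i * X * hA.eigenProj j) := by
  simp only [hA.exp_smul, Finset.sum_mul, Finset.mul_sum, smul_mul_assoc, mul_smul_comm,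
    Finset.smul_sum, smul_smul, mul_add, Real.exp_add]
  rw [Finset.sum_comm]
  simp only [mul_comm]

noncomputable def sylvesterSolution (X : Matrix ι ι 𝕜) : Matrix ι ι 𝕜 :=
  ∑ i, ∑ j, (hA.eigenvalues i + hA.eigenvalues j)⁻¹ • (hA.eigenProj i * X * hA.eigenProj j)

end Matrix.IsHermitian

namespace Matrix.PosDef

variable {𝕜 ι : Type*} [RCLike 𝕜] [Fintype ι] [DecidableEq ι] {A : Matrix ι ι 𝕜}

lemma mul_sylvesterSolution_add (hA : A.PosDef) (X : Matrix ι ι 𝕜) :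
    A * hA.isHermitian.sylvesterSolution X + hA.isHermitian.sylvesterSolution X * A = X := by
  have hne : ∀ i j, hA.isHermitian.eigenvalues i + hA.isHermitian.eigenvalues j ≠ 0 :=
    fun i j => (add_pos (hA.eigenvalues_pos i) (hA.eigenvalues_pos j)).ne'
  conv_rhs => rw [← hA.isHermitian.sum_sum_eigenProj_mul_mul X]
  simp only [IsHermitian.sylvesterSolution, Finset.mul_sum, Finset.sum_mul, mul_smul_comm,
    smul_mul_assoc, ← Finset.sum_add_distrib, ← smul_add,
    hA.isHermitian.mul_add_mul_eigenProj_mul_mul, smul_smul]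
  simp [hne]

lemma sylvester_injective (hA : A.PosDef) : Function.Injective fun Ω => A * Ω + Ω * A := by
  have hsurj : Function.Surjective (LinearMap.mulLeft 𝕜 A + LinearMap.mulRight 𝕜 A) :=
    fun X => ⟨_, hA.mul_sylvesterSolution_add X⟩
  exact LinearMap.injective_iff_surjective.mpr hsurj

end Matrix.PosDef

lemma integrableOn_exp_neg_mul_smul_Ioi {E : Type*} [NormedAddCommGroup E] [NormedSpace ℝ E]
    {c : ℝ} (hc : 0 < c) (v : E) :
    IntegrableOn (fun τ : ℝ => Real.exp (-c * τ) • v) (Ioi 0) :=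
  (exp_neg_integrableOn_Ioi 0 hc).smul_const v

lemma integral_exp_neg_mul_smul_Ioi {E : Type*} [NormedAddCommGroup E] [NormedSpace ℝ E]
    [CompleteSpace E] {c : ℝ} (hc : 0 < c) (v : E) :
    ∫ τ in Ioi (0 : ℝ), Real.exp (-c * τ) • v = c⁻¹ • v := by
  rw [integral_smul_const, integral_exp_mul_Ioi (neg_lt_zero.mpr hc), mul_zero, Real.exp_zero,
    neg_div_neg_eq, one_div]

section Lyapunov

variable {n : ℕ} {A : Matrix (Fin n) (Fin n) ℝ}

lemma lyapInt_eq_sylvesterSolution (hA : A.PosDef) (X : Matrix (Fin n) (Fin n) ℝ) :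
    lyapInt A X = hA.isHermitian.sylvesterSolution X := by
  have hpos : ∀ i j, 0 < hA.isHermitian.eigenvalues i + hA.isHermitian.eigenvalues j :=
    fun i j => add_pos (hA.eigenvalues_pos i) (hA.eigenvalues_pos j)
  have hF : ∀ τ : ℝ, NormedSpace.exp (-(τ • A)) * X * NormedSpace.exp (-(τ • A)) =
      ∑ i, ∑ j, Real.exp (-(hA.isHermitian.eigenvalues i + hA.isHermitian.eigenvalues j) * τ) •
        (hA.isHermitian.eigenProj i * X * hA.isHermitian.eigenProj j) := by
    intro τ
    simp only [← neg_smul, hA.isHermitian.exp_smul_mul_mul_exp_smul, neg_mul, mul_comm τ]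
  simp only [lyapInt, hF, IsHermitian.sylvesterSolution]
  rw [integral_finsetSum]
  · refine Finset.sum_congr rfl fun i _ => ?_
    rw [integral_finsetSum]
    · exact Finset.sum_congr rfl fun j _ => integral_exp_neg_mul_smul_Ioi (hpos i j) _
    · exact fun j _ => integrableOn_exp_neg_mul_smul_Ioi (hpos i j) _
  · exact fun i _ => integrable_finsetSum _ fun j _ =>
      integrableOn_exp_neg_mul_smul_Ioi (hpos i j) _

lemma mul_lyapInt_add_lyapInt_mul (hA : A.PosDef) (X : Matrix (Fin n) (Fin n) ℝ) :
    A * lyapInt A X + lyapInt A X * A = X := by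
  rw [lyapInt_eq_sylvesterSolution hA]
  exact hA.mul_sylvesterSolution_add X

lemma transpose_lyapInt_of_transpose_eq_neg (hA : A.PosDef) {X : Matrix (Fin n) (Fin n) ℝ}
    (hX : Xᵀ = -X) : (lyapInt A X)ᵀ = -lyapInt A X := by
  have hAt : Aᵀ = A := (isHermitian_iff_isSymm.mp hA.isHermitian).eq
  have hL := mul_lyapInt_add_lyapInt_mul hA X
  apply hA.sylvester_injective
  calc A * (lyapInt A X)ᵀ + (lyapInt A X)ᵀ * A = (A * lyapInt A X + lyapInt A X * A)ᵀ := by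
        rw [transpose_add, transpose_mul, transpose_mul, hAt, add_comm]
    _ = A * -lyapInt A X + -lyapInt A X * A := by
        rw [hL, hX, mul_neg, neg_mul, ← neg_add, hL]

end Lyapunov

lemma transpose_mul_sub_mul_eq_neg {R ι : Type*} [CommRing R] [Fintype ι] {A B : Matrix ι ι R}
    (hA : A.IsSymm) (hB : B.IsSymm) : (A * B - B * A)ᵀ = -(A * B - B * A) := by
  rw [transpose_sub, transpose_mul, transpose_mul, hA.eq, hB.eq, neg_sub]

theorem optimal_coupling_exists_unique_general {n : ℕ} (S T : Matrix (Fin n) (Fin n) ℝ) (k_B : ℝ)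
    (hS : S.PosDef) (hT : T.IsHermitian) :
    (∃! Ω : Matrix (Fin n) (Fin n) ℝ,
      S⁻¹ * Ω + Ω * S⁻¹ = (k_B / 2) • (S⁻¹ * T - T * S⁻¹)) ∧
    (S⁻¹ * ((k_B / 2) • lyapInt S⁻¹ (S⁻¹ * T - T * S⁻¹)) +
        ((k_B / 2) • lyapInt S⁻¹ (S⁻¹ * T - T * S⁻¹)) * S⁻¹ =
      (k_B / 2) • (S⁻¹ * T - T * S⁻¹)) ∧
    ((k_B / 2) • lyapInt S⁻¹ (S⁻¹ * T - T * S⁻¹))ᵀ =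
      -((k_B / 2) • lyapInt S⁻¹ (S⁻¹ * T - T * S⁻¹)) := by
  have hA : (S⁻¹).PosDef := hS.inv
  have hX : (S⁻¹ * T - T * S⁻¹)ᵀ = -(S⁻¹ * T - T * S⁻¹) :=
    transpose_mul_sub_mul_eq_neg (isHermitian_iff_isSymm.mp hA.isHermitian)
      (isHermitian_iff_isSymm.mp hT)
  have hsol : S⁻¹ * ((k_B / 2) • lyapInt S⁻¹ (S⁻¹ * T - T * S⁻¹)) +
      ((k_B / 2) • lyapInt S⁻¹ (S⁻¹ * T - T * S⁻¹)) * S⁻¹ = (k_B / 2) • (S⁻¹ * T - T * S⁻¹) := by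
    rw [mul_smul_comm, smul_mul_assoc, ← smul_add, mul_lyapInt_add_lyapInt_mul hA]
  refine ⟨⟨_, hsol, fun Ω hΩ => hA.sylvester_injective (hΩ.trans hsol.symm)⟩, hsol, ?_⟩
  rw [transpose_smul, transpose_lyapInt_of_transpose_eq_neg hA hX, smul_neg]

/-- The equation `S⁻¹Ω + ΩS⁻¹ = (k_B/2)(S⁻¹T - TS⁻¹)` has a unique solution; the solution is
skew-symmetric and equals `Ω* = (k_B/2) 𝓛_{S⁻¹}(S⁻¹T - TS⁻¹)`. -/
theorem optimal_coupling_exists_unique {n : ℕ} (S T : Matrix (Fin n) (Fin n) ℝ) (k_B : ℝ)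
    (hS : S.PosDef) (hT : T.IsHermitian) (hkB : 0 < k_B) :
    (∃! Ω : Matrix (Fin n) (Fin n) ℝ,
      S⁻¹ * Ω + Ω * S⁻¹ = (k_B / 2) • (S⁻¹ * T - T * S⁻¹)) ∧
    (S⁻¹ * ((k_B / 2) • lyapInt S⁻¹ (S⁻¹ * T - T * S⁻¹)) +
        ((k_B / 2) • lyapInt S⁻¹ (S⁻¹ * T - T * S⁻¹)) * S⁻¹ =
      (k_B / 2) • (S⁻¹ * T - T * S⁻¹)) ∧
    ((k_B / 2) • lyapInt S⁻¹ (S⁻¹ * T - T * S⁻¹))ᵀ =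
      -((k_B / 2) • lyapInt S⁻¹ (S⁻¹ * T - T * S⁻¹)) :=
  optimal_coupling_exists_unique_general S T k_B hS hT
end

section
/- Let K and T be symmetric n×n real matrices with K and Σ positive definite and k_B > 0, suppose K Σ + Σ K = 2 k_B T, and set Ω* := (1/4)(K Σ − Σ K). Then −Ω* Σ⁻¹ = (1/2)(−K + k_B T Σ⁻¹); i.e., the optimal load force f_L*(x) = −Ω*Σ⁻¹x equals half the source force f_S(x) = (−K + k_B T Σ⁻¹)x at every x ∈ ℝⁿ (the matching principle f_L* = f_S/2 for the Brownian gyrator). -/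
open Matrix

/-- The matching principle for the Brownian gyrator: with `Ω* = (1/4)(K S - S K)`, the optimal
load force `f_L*(x) = -Ω*S⁻¹x` equals half the source force `f_S(x) = (-K + k_B T S⁻¹)x`. -/
theorem matching_principle_gyrator {n : ℕ} (K T S : Matrix (Fin n) (Fin n) ℝ) (k_B : ℝ)
    (hK : K.PosDef) (hT : T.IsHermitian) (hS : S.PosDef) (hkB : 0 < k_B)
    (hlyap : K * S + S * K = (2 * k_B) • T) :
    (-(((1 / 4 : ℝ) • (K * S - S * K)) * S⁻¹) = (1 / 2 : ℝ) • (-K + k_B • (T * S⁻¹))) ∧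
    (∀ x : Fin n → ℝ,
      -((((1 / 4 : ℝ) • (K * S - S * K)) * S⁻¹) *ᵥ x) =
        (1 / 2 : ℝ) • ((-K + k_B • (T * S⁻¹)) *ᵥ x)) := by
  have hdet : IsUnit S.det := isUnit_iff_ne_zero.mpr hS.det_pos.ne'
  have h1 : S * S⁻¹ = 1 := Matrix.mul_nonsing_inv S hdet
  have key : (2 * k_B) • (T * S⁻¹) = K + S * K * S⁻¹ := by
    have := congrArg (· * S⁻¹) hlyap
    simp only [Matrix.smul_mul, add_mul] at this
    rw [← this, mul_assoc K S S⁻¹, h1, mul_one, mul_assoc]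
  have hmat : (-(((1 / 4 : ℝ) • (K * S - S * K)) * S⁻¹) =
      (1 / 2 : ℝ) • (-K + k_B • (T * S⁻¹))) := by
    have hk : k_B • (T * S⁻¹) = (1 / 2 : ℝ) • (K + S * K * S⁻¹) := by
      rw [← key, smul_smul]; congr 1; ring
    rw [hk]
    rw [Matrix.smul_mul, sub_mul, mul_assoc K S S⁻¹, h1, mul_one, mul_assoc]
    module
  refine ⟨hmat, fun x => ?_⟩
  rw [← Matrix.neg_mulVec, hmat, Matrix.smul_mulVec]
end

section
/- Let Σ be a symmetric positive definite n×n real matrix, T a symmetric n×n real matrix, k_B > 0, and let Ω* be a skew-symmetric matrix satisfying Σ⁻¹ Ω* + Ω* Σ⁻¹ = (k_B/2)(Σ⁻¹ T − T Σ⁻¹). Then Tr(Ω* Σ⁻¹ Ω*ᵀ + k_B Ω* Σ⁻¹ T) = −(k_B/2) Tr(T Σ⁻¹ Ω*); consequently, for any γ > 0 the maximal steady-state power output of the Brownian gyrator equals P* = (k_B/(2γ)) Tr(T Σ⁻¹ Ω*). -/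
/-!
Multiplying the Lyapunov-type equation `M Ω + Ω M = c (M T - T M)` (with `M = S⁻¹`) on the left by
`Ω` and taking traces gives `2 Tr(Ω M Ω) = c (Tr(Ω M T) - Tr(Ω T M))`. Transposition, using that
`M` and `T` are symmetric and `Ω` is skew, shows `Tr(Ω T M) = -Tr(Ω M T)`, so
`Tr(Ω M Ω) = c Tr(Ω M T)`. With `c = k_B / 2` and `Tr(Ω M Ωᵀ) = -Tr(Ω M Ω)` the claimed identity
follows by linear algebra in the two traces.
-/

open Matrix

namespace Matrix

variable {ι R : Type*} [Fintype ι]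

theorem trace_mul_mul_swap_of_transpose_eq_neg [CommRing R] {A B C : Matrix ι ι R}
    (hA : Aᵀ = -A) (hB : B.IsSymm) (hC : C.IsSymm) :
    trace (A * C * B) = -trace (A * B * C) := by
  calc trace (A * C * B) = trace ((A * C * B)ᵀ) := (trace_transpose _).symm
    _ = -trace (B * C * A) := by
      rw [transpose_mul, transpose_mul, hA, hB.eq, hC.eq, mul_neg, mul_neg, trace_neg, mul_assoc]
    _ = -trace (A * B * C) := by rw [trace_mul_cycle]

theorem trace_mul_mul_self_of_lyapunov [Field R] [CharZero R] {M T A : Matrix ι ι R} {c : R}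
    (hM : M.IsSymm) (hT : T.IsSymm) (hA : Aᵀ = -A)
    (h : M * A + A * M = c • (M * T - T * M)) :
    trace (A * M * A) = c * trace (A * M * T) := by
  have hAAM : trace (A * (A * M)) = trace (A * M * A) := trace_mul_comm _ _
  have hATM : trace (A * (T * M)) = -trace (A * M * T) := by
    rw [← mul_assoc, trace_mul_mul_swap_of_transpose_eq_neg hA hM hT]
  have htwice : 2 * trace (A * M * A) = 2 * (c * trace (A * M * T)) :=
    calc 2 * trace (A * M * A) = trace (A * (M * A + A * M)) := by
          rw [mul_add, trace_add, hAAM, ← mul_assoc]; ring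
      _ = trace (A * (c • (M * T - T * M))) := by rw [h]
      _ = 2 * (c * trace (A * M * T)) := by
          rw [Matrix.mul_smul, trace_smul, mul_sub, trace_sub, hATM, ← mul_assoc, smul_eq_mul]; ring
  exact mul_left_cancel₀ two_ne_zero htwice

theorem trace_dissipation_of_lyapunov [Field R] [CharZero R] {M T A : Matrix ι ι R} {k : R}
    (hM : M.IsSymm) (hT : T.IsSymm) (hA : Aᵀ = -A)
    (h : M * A + A * M = (k / 2) • (M * T - T * M)) :
    trace (A * M * Aᵀ + k • (A * M * T)) = -(k / 2) * trace (T * M * A) := by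
  have hTMA : trace (T * M * A) = -trace (A * M * T) := by
    rw [trace_mul_cycle, trace_mul_mul_swap_of_transpose_eq_neg hA hM hT]
  rw [trace_add, trace_smul, hA, mul_neg, trace_neg,
    trace_mul_mul_self_of_lyapunov hM hT hA h, hTMA, smul_eq_mul]
  ring

end Matrix

theorem max_power_formula_general {n : ℕ} (S T Ω : Matrix (Fin n) (Fin n) ℝ) (k_B : ℝ)
    (hS : S.PosDef) (hT : T.IsHermitian) (hΩskew : Ωᵀ = -Ω)
    (hΩ : S⁻¹ * Ω + Ω * S⁻¹ = (k_B / 2) • (S⁻¹ * T - T * S⁻¹)) :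
    (Ω * S⁻¹ * Ωᵀ + k_B • (Ω * S⁻¹ * T)).trace = -(k_B / 2) * (T * S⁻¹ * Ω).trace ∧
    (∀ γ : ℝ, 0 < γ →
      -(1 / γ) * (Ω * S⁻¹ * Ωᵀ + k_B • (Ω * S⁻¹ * T)).trace =
        (k_B / (2 * γ)) * (T * S⁻¹ * Ω).trace) := by
  have hdiss := trace_dissipation_of_lyapunov
    (isHermitian_iff_isSymm.mp hS.isHermitian).inv (isHermitian_iff_isSymm.mp hT) hΩskew hΩ
  refine ⟨hdiss, fun γ hγ => ?_⟩
  rw [hdiss]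
  field_simp

/-- For the optimal skew-symmetric coupling `Ω*` solving
`S⁻¹Ω* + Ω*S⁻¹ = (k_B/2)(S⁻¹T - TS⁻¹)`, one has
`Tr(Ω*S⁻¹Ω*ᵀ + k_B Ω*S⁻¹T) = -(k_B/2) Tr(TS⁻¹Ω*)`; hence the maximal power output is
`P* = (k_B/(2γ)) Tr(TS⁻¹Ω*)`. -/
theorem max_power_formula {n : ℕ} (S T Ω : Matrix (Fin n) (Fin n) ℝ) (k_B : ℝ)
    (hS : S.PosDef) (hT : T.IsHermitian) (hkB : 0 < k_B) (hΩskew : Ωᵀ = -Ω)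
    (hΩ : S⁻¹ * Ω + Ω * S⁻¹ = (k_B / 2) • (S⁻¹ * T - T * S⁻¹)) :
    (Ω * S⁻¹ * Ωᵀ + k_B • (Ω * S⁻¹ * T)).trace = -(k_B / 2) * (T * S⁻¹ * Ω).trace ∧
    (∀ γ : ℝ, 0 < γ →
      -(1 / γ) * (Ω * S⁻¹ * Ωᵀ + k_B • (Ω * S⁻¹ * T)).trace =
        (k_B / (2 * γ)) * (T * S⁻¹ * Ω).trace) :=
  max_power_formula_general S T Ω k_B hS hT hΩskew hΩ
end

section
/- Let Σ be a symmetric positive definite n×n real matrix, T a symmetric n×n real matrix, k_B > 0, define F(Ω) := Tr(Ω Σ⁻¹ Ωᵀ) + k_B Tr(Ω Σ⁻¹ T), and let Ω* := (k_B/2) 𝓛_{Σ⁻¹}(Σ⁻¹T − TΣ⁻¹) be the unique skew-symmetric solution of Σ⁻¹Ω + ΩΣ⁻¹ = (k_B/2)(Σ⁻¹T − TΣ⁻¹). Then for every skew-symmetric n×n matrix Ω one has F(Ω) ≥ F(Ω*), with equality if and only if Ω = Ω*; i.e., Ω* is the unique maximizer of the steady-state power output P = −F(Ω)/γ over all skew-symmetric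 couplings. -/
open Matrix MeasureTheory

attribute [local instance] Matrix.linftyOpNormedAddCommGroup Matrix.linftyOpNormedSpace

/-! Write `Ω = Ω* + Δ` with `Δ` skew-symmetric. Because `Ω*` solves the Lyapunov equation
`S⁻¹Ω* + Ω*S⁻¹ = (k_B/2)(S⁻¹T - TS⁻¹)`, the terms of `F(Ω* + Δ)` linear in `Δ` cancel, leaving
`F(Ω) = F(Ω*) + Tr(Δ S⁻¹ Δᵀ)`, and the last term is positive unless `Δ = 0`.
That `𝓛_A X` solves `AY + YA = X` is the fundamental theorem of calculus for
`τ ↦ e^{-τA} X e^{-τA}`, which decays exponentially by the spectral theorem; the skew-symmetry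
of `Ω*` then follows from uniqueness of solutions of `AY + YA = X` for positive definite `A`. -/

namespace Matrix

variable {l m : Type*} [Fintype l] [Fintype m]

lemma trace_mul_mul_transpose (B : Matrix l m ℝ) (A : Matrix m m ℝ) :
    (B * A * Bᵀ).trace = ∑ i, B i ⬝ᵥ (A *ᵥ B i) :=
  Finset.sum_congr rfl fun i _ => by rw [dotProduct_mulVec]; rfl

lemma PosSemidef.trace_mul_mul_transpose_nonneg {A : Matrix m m ℝ}
    (hA : A.PosSemidef) (B : Matrix l m ℝ) : 0 ≤ (B * A * Bᵀ).trace := by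
  rw [trace_mul_mul_transpose]
  exact Finset.sum_nonneg fun i _ => by simpa using hA.dotProduct_mulVec_nonneg (B i)

lemma PosDef.trace_mul_mul_transpose_eq_zero_iff {A : Matrix m m ℝ}
    (hA : A.PosDef) {B : Matrix l m ℝ} : (B * A * Bᵀ).trace = 0 ↔ B = 0 := by
  rw [trace_mul_mul_transpose, Finset.sum_eq_zero_iff_of_nonneg fun i _ => by
    simpa using hA.posSemidef.dotProduct_mulVec_nonneg (B i)]
  simp only [Finset.mem_univ, true_implies]
  refine (forall_congr' fun i => ⟨fun h => ?_, fun h => by rw [h]; exact zero_dotProduct _⟩).trans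
    funext_iff.symm
  by_contra hi
  exact (hA.dotProduct_mulVec_pos hi).ne' (by simpa using h)

lemma PosDef.eq_zero_of_mul_add_mul_eq_zero_s17 {A Y : Matrix m m ℝ} (hA : A.PosDef)
    (h : A * Y + Y * A = 0) : Y = 0 := by
  have htr : (Yᵀ * A * Yᵀᵀ).trace + (Y * A * Yᵀ).trace = 0 := by
    have := congrArg (fun M => (Yᵀ * M).trace) h
    simp only [Matrix.mul_add, trace_add, Matrix.mul_zero, trace_zero] at this
    rwa [transpose_transpose, Matrix.mul_assoc Yᵀ, trace_mul_comm (Y * A)]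
  rw [← hA.trace_mul_mul_transpose_eq_zero_iff]
  linarith [hA.posSemidef.trace_mul_mul_transpose_nonneg Yᵀ,
    hA.posSemidef.trace_mul_mul_transpose_nonneg Y]

lemma PosDef.transpose_eq_neg_of_mul_add_mul_eq {A L X : Matrix m m ℝ} (hA : A.PosDef)
    (hL : A * L + L * A = X) (hX : Xᵀ = -X) : Lᵀ = -L := by
  have hLt : A * Lᵀ + Lᵀ * A = -X := by
    rw [← hX, ← hL, transpose_add, transpose_mul, transpose_mul,
      (isHermitian_iff_isSymm.1 hA.isHermitian).eq, add_comm]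
  rw [← add_eq_zero_iff_eq_neg]
  refine hA.eq_zero_of_mul_add_mul_eq_zero_s17 ?_
  rw [Matrix.mul_add, Matrix.add_mul, add_add_add_comm, hLt, hL, neg_add_cancel]

lemma trace_mul_eq_neg_trace_mul_transpose {Δ : Matrix m m ℝ} (hΔ : Δᵀ = -Δ)
    (M : Matrix m m ℝ) : (Δ * M).trace = -(Δ * Mᵀ).trace := by
  rw [← trace_transpose, transpose_mul, hΔ, Matrix.mul_neg, trace_neg, trace_mul_comm]

end Matrix

section Cost

variable {m : Type*} [Fintype m]

-- With `A = S⁻¹` and `c = k_B` this is `F(Ω)`.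
def couplingCost (A T : Matrix m m ℝ) (c : ℝ) (Ω : Matrix m m ℝ) : ℝ :=
  (Ω * A * Ωᵀ).trace + c * (Ω * A * T).trace

lemma couplingCost_add {A T W Δ : Matrix m m ℝ} {c : ℝ} (hA : A.IsSymm) (hT : T.IsSymm)
    (hW : Wᵀ = -W) (hΔ : Δᵀ = -Δ) (hWA : A * W + W * A = (c / 2) • (A * T - T * A)) :
    couplingCost A T c (W + Δ) = couplingCost A T c W + (Δ * A * Δᵀ).trace := by
  have hTA : (Δ * (T * A)).trace = -(Δ * (A * T)).trace := by
    rw [trace_mul_eq_neg_trace_mul_transpose hΔ, transpose_mul, hA.eq, hT.eq]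
  have hWAΔ : (Δ * (A * W)).trace + (Δ * (W * A)).trace =
      c / 2 * ((Δ * (A * T)).trace - (Δ * (T * A)).trace) := by
    simpa only [Matrix.mul_add, Matrix.mul_sub, Matrix.mul_smul, trace_add, trace_sub,
      trace_smul, smul_eq_mul] using congrArg (fun M => (Δ * M).trace) hWA
  have hcross : (W * A * Δᵀ).trace + (Δ * A * Wᵀ).trace + c * (Δ * A * T).trace = 0 := by
    rw [hΔ, hW, Matrix.mul_neg, Matrix.mul_neg, trace_neg, trace_neg, trace_mul_comm,
      Matrix.mul_assoc, Matrix.mul_assoc Δ]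
    linear_combination -hWAΔ + c / 2 * hTA
  simp only [couplingCost, transpose_add, Matrix.add_mul, Matrix.mul_add, trace_add]
  linear_combination hcross

end Cost

open NormedSpace Filter Set

attribute [local instance] Matrix.linftyOpNormedRing Matrix.linftyOpNormedAlgebra

namespace Matrix

-- The topology of the operator norm agrees with the product topology on matrices only up to
-- unfolding, so instance search does not find these two instances by itself.
noncomputable instance {n : ℕ} : ContinuousENorm (Matrix (Fin n) (Fin n) ℝ) :=
  SeminormedAddGroup.toContinuousENorm

instance {n : ℕ} : TopologicalSpace.PseudoMetrizableSpace (Matrix (Fin n) (Fin n) ℝ) :=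
  inferInstanceAs (TopologicalSpace.PseudoMetrizableSpace (Fin n → Fin n → ℝ))

variable {n : ℕ} {A : Matrix (Fin n) (Fin n) ℝ}

noncomputable def lyapIntegrand (A X : Matrix (Fin n) (Fin n) ℝ) (τ : ℝ) :
    Matrix (Fin n) (Fin n) ℝ :=
  exp (-(τ • A)) * X * exp (-(τ • A))

lemma PosDef.exists_norm_exp_neg_smul_le (hA : A.PosDef) :
    ∃ C μ : ℝ, 0 < μ ∧ ∀ τ : ℝ, 0 ≤ τ → ‖exp (-(τ • A))‖ ≤ C * Real.exp (-μ * τ) := by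
  set U : Matrix (Fin n) (Fin n) ℝ :=
    (hA.isHermitian.eigenvectorUnitary : Matrix (Fin n) (Fin n) ℝ)
  set d := hA.isHermitian.eigenvalues
  obtain ⟨μ, hμd, hμ⟩ : ∃ μ : ℝ, (∀ i, μ ≤ d i) ∧ 0 < μ :=
    (((eventually_all.2 fun i => eventually_le_nhds (hA.eigenvalues_pos i)).filter_mono
      nhdsWithin_le_nhds).and (self_mem_nhdsWithin (s := Ioi 0))).exists
  have hUinv : U⁻¹ = star U := inv_eq_left_inv (Unitary.star_mul_self_of_mem (SetLike.coe_mem _))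
  have hU : IsUnit U := Unitary.isUnit_coe
  refine ⟨‖U‖ * ‖star U‖, μ, hμ, fun τ hτ => ?_⟩
  have hexp : exp (-(τ • A)) = U * diagonal (exp fun i => -(τ * d i)) * star U := by
    rw [← exp_diagonal, ← hUinv, ← exp_conj _ _ hU, hUinv]
    congr 1
    conv_lhs => rw [hA.isHermitian.spectral_theorem, Unitary.conjStarAlgAut_apply]
    have hD : (diagonal fun i => -(τ * d i)) = -(τ • diagonal (RCLike.ofReal ∘ d)) := by
      ext i j; by_cases h : i = j <;> simp [h]
    rw [hD, mul_neg, neg_mul, Matrix.mul_smul, Matrix.smul_mul]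
  have hdiag : ‖diagonal (exp fun i => -(τ * d i))‖ ≤ Real.exp (-μ * τ) := by
    rw [linfty_opNorm_diagonal, pi_norm_le_iff_of_nonneg (Real.exp_nonneg _)]
    intro i
    rw [Pi.coe_exp, ← Real.exp_eq_exp_ℝ, Real.norm_of_nonneg (Real.exp_nonneg _), Real.exp_le_exp]
    nlinarith [hμd i]
  rw [hexp]
  calc _ ≤ ‖U‖ * ‖diagonal (exp fun i => -(τ * d i))‖ * ‖star U‖ := norm_mul₃_le
    _ ≤ ‖U‖ * Real.exp (-μ * τ) * ‖star U‖ := by gcongr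
    _ = _ := by ring

lemma PosDef.exists_norm_lyapIntegrand_le (hA : A.PosDef) (X : Matrix (Fin n) (Fin n) ℝ) :
    ∃ C μ : ℝ, 0 < μ ∧ ∀ τ : ℝ, 0 ≤ τ →
      ‖lyapIntegrand A X τ‖ ≤ C * Real.exp (-μ * τ) := by
  obtain ⟨C, μ, hμ, hC⟩ := hA.exists_norm_exp_neg_smul_le
  refine ⟨C * ‖X‖ * C, 2 * μ, by positivity, fun τ hτ => ?_⟩
  calc _ ≤ ‖exp (-(τ • A))‖ * ‖X‖ * ‖exp (-(τ • A))‖ := norm_mul₃_le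
    _ ≤ C * Real.exp (-μ * τ) * ‖X‖ * (C * Real.exp (-μ * τ)) := by
        have hCe := (norm_nonneg _).trans (hC τ hτ)
        gcongr ?_ * _ * ?_ <;> exact hC τ hτ
    _ = C * ‖X‖ * C * Real.exp (-(2 * μ) * τ) := by
        rw [show -(2 * μ) * τ = -μ * τ + -μ * τ by ring, Real.exp_add]; ring

lemma PosDef.integrableOn_lyapIntegrand (hA : A.PosDef) (X : Matrix (Fin n) (Fin n) ℝ) :
    IntegrableOn (lyapIntegrand A X) (Ioi 0) := by
  obtain ⟨C, μ, hμ, hbound⟩ := hA.exists_norm_lyapIntegrand_le X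
  refine Integrable.mono' ((exp_neg_integrableOn_Ioi 0 hμ).const_mul C)
    (by unfold lyapIntegrand; fun_prop : Continuous _).aestronglyMeasurable.restrict ?_
  filter_upwards [self_mem_ae_restrict measurableSet_Ioi] with τ hτ
  exact hbound τ (le_of_lt hτ)

lemma PosDef.tendsto_lyapIntegrand_atTop (hA : A.PosDef) (X : Matrix (Fin n) (Fin n) ℝ) :
    Tendsto (lyapIntegrand A X) atTop (nhds 0) := by
  obtain ⟨C, μ, hμ, hbound⟩ := hA.exists_norm_lyapIntegrand_le X
  have hdecay : Tendsto (fun τ : ℝ => C * Real.exp (-μ * τ)) atTop (nhds 0) := by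
    simpa using (Real.tendsto_exp_atBot.comp
      (tendsto_id.const_mul_atTop_of_neg (neg_lt_zero.2 hμ))).const_mul C
  exact squeeze_zero_norm' (eventually_ge_atTop 0 |>.mono hbound) hdecay

lemma hasDerivAt_lyapIntegrand (A X : Matrix (Fin n) (Fin n) ℝ) (τ : ℝ) :
    HasDerivAt (lyapIntegrand A X) (-(A * lyapIntegrand A X τ + lyapIntegrand A X τ * A)) τ := by
  unfold lyapIntegrand
  simp_rw [← smul_neg]
  exact (((hasDerivAt_exp_smul_const' (-A) τ).mul_const X).mul
    (hasDerivAt_exp_smul_const (-A) τ)).congr_deriv (by noncomm_ring)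

lemma PosDef.mul_lyapInt_add_lyapInt_mul (hA : A.PosDef) (X : Matrix (Fin n) (Fin n) ℝ) :
    A * lyapInt A X + lyapInt A X * A = X := by
  have hf := hA.integrableOn_lyapIntegrand X
  have hFTC := integral_Ioi_of_hasDerivAt_of_tendsto' (fun τ _ => hasDerivAt_lyapIntegrand A X τ)
    ((hf.const_mul A).add (hf.mul_const A)).neg (hA.tendsto_lyapIntegrand_atTop X)
  rw [integral_neg, integral_add (hf.const_mul A) (hf.mul_const A),
    integral_const_mul_of_integrable hf, integral_mul_const_of_integrable hf] at hFTC
  rw [lyapIntegrand, zero_smul, neg_zero, exp_zero, one_mul, mul_one, zero_sub, neg_inj] at hFTC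
  exact hFTC

end Matrix

theorem optimal_coupling_is_minimizer_general {n : ℕ} (S T : Matrix (Fin n) (Fin n) ℝ) (k_B : ℝ)
    (hS : S.PosDef) (hT : T.IsHermitian) :
    ∀ Ω : Matrix (Fin n) (Fin n) ℝ, Ωᵀ = -Ω →
      ((((k_B / 2) • lyapInt S⁻¹ (S⁻¹ * T - T * S⁻¹)) * S⁻¹ *
            ((k_B / 2) • lyapInt S⁻¹ (S⁻¹ * T - T * S⁻¹))ᵀ).trace +
          k_B * (((k_B / 2) • lyapInt S⁻¹ (S⁻¹ * T - T * S⁻¹)) * S⁻¹ * T).trace ≤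
        (Ω * S⁻¹ * Ωᵀ).trace + k_B * (Ω * S⁻¹ * T).trace) ∧
      ((Ω * S⁻¹ * Ωᵀ).trace + k_B * (Ω * S⁻¹ * T).trace =
          (((k_B / 2) • lyapInt S⁻¹ (S⁻¹ * T - T * S⁻¹)) * S⁻¹ *
              ((k_B / 2) • lyapInt S⁻¹ (S⁻¹ * T - T * S⁻¹))ᵀ).trace +
            k_B * (((k_B / 2) • lyapInt S⁻¹ (S⁻¹ * T - T * S⁻¹)) * S⁻¹ * T).trace ↔
        Ω = (k_B / 2) • lyapInt S⁻¹ (S⁻¹ * T - T * S⁻¹)) := by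
  intro Ω hΩ
  set X := S⁻¹ * T - T * S⁻¹
  set W := (k_B / 2) • lyapInt S⁻¹ X
  have hA : S⁻¹.PosDef := hS.inv
  have hAsymm : S⁻¹.IsSymm := isHermitian_iff_isSymm.1 hA.isHermitian
  have hTsymm : T.IsSymm := isHermitian_iff_isSymm.1 hT
  have hX : Xᵀ = -X := by
    rw [transpose_sub, transpose_mul, transpose_mul, hAsymm.eq, hTsymm.eq, neg_sub]
  have hL := hA.mul_lyapInt_add_lyapInt_mul X
  have hW : Wᵀ = -W := by
    rw [transpose_smul, hA.transpose_eq_neg_of_mul_add_mul_eq hL hX, smul_neg]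
  have hWA : S⁻¹ * W + W * S⁻¹ = (k_B / 2) • X := by
    rw [Matrix.mul_smul, Matrix.smul_mul, ← smul_add, hL]
  have hΔ : (Ω - W)ᵀ = -(Ω - W) := by rw [transpose_sub, hΩ, hW, neg_sub_neg, neg_sub]
  have hcost := couplingCost_add hAsymm hTsymm hW hΔ hWA
  rw [add_sub_cancel] at hcost
  change couplingCost S⁻¹ T k_B W ≤ couplingCost S⁻¹ T k_B Ω ∧
    (couplingCost S⁻¹ T k_B Ω = couplingCost S⁻¹ T k_B W ↔ Ω = W)
  rw [hcost, add_eq_left, hA.trace_mul_mul_transpose_eq_zero_iff, sub_eq_zero]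
  exact ⟨le_add_of_nonneg_right (hA.posSemidef.trace_mul_mul_transpose_nonneg _), Iff.rfl⟩

/-- `Ω* = (k_B/2) 𝓛_{S⁻¹}(S⁻¹T - TS⁻¹)` is the unique minimizer of
`F(Ω) = Tr(ΩS⁻¹Ωᵀ) + k_B Tr(ΩS⁻¹T)` over skew-symmetric matrices, i.e. the unique maximizer
of the steady-state power output `P = -F(Ω)/γ`. -/
theorem optimal_coupling_is_minimizer {n : ℕ} (S T : Matrix (Fin n) (Fin n) ℝ) (k_B : ℝ)
    (hS : S.PosDef) (hT : T.IsHermitian) (hkB : 0 < k_B) :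
    ∀ Ω : Matrix (Fin n) (Fin n) ℝ, Ωᵀ = -Ω →
      ((((k_B / 2) • lyapInt S⁻¹ (S⁻¹ * T - T * S⁻¹)) * S⁻¹ *
            ((k_B / 2) • lyapInt S⁻¹ (S⁻¹ * T - T * S⁻¹))ᵀ).trace +
          k_B * (((k_B / 2) • lyapInt S⁻¹ (S⁻¹ * T - T * S⁻¹)) * S⁻¹ * T).trace ≤
        (Ω * S⁻¹ * Ωᵀ).trace + k_B * (Ω * S⁻¹ * T).trace) ∧
      ((Ω * S⁻¹ * Ωᵀ).trace + k_B * (Ω * S⁻¹ * T).trace =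
          (((k_B / 2) • lyapInt S⁻¹ (S⁻¹ * T - T * S⁻¹)) * S⁻¹ *
              ((k_B / 2) • lyapInt S⁻¹ (S⁻¹ * T - T * S⁻¹))ᵀ).trace +
            k_B * (((k_B / 2) • lyapInt S⁻¹ (S⁻¹ * T - T * S⁻¹)) * S⁻¹ * T).trace ↔
        Ω = (k_B / 2) • lyapInt S⁻¹ (S⁻¹ * T - T * S⁻¹)) :=
  optimal_coupling_is_minimizer_general S T k_B hS hT
end
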